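/- arXiv:0710.3844 — 7 statements merged into one kernel-verified Lean document; each statement's English description precedes it below -/
import Mathlib

section
/- For n ≥ 1, matrix–vector multiplication by elements of Sp(n) preserves the unit sphere S^{4n−1} ⊂ ℍⁿ, and the resulting action is transitive: for any u, w ∈ S^{4n−1} there exists A ∈ Sp(n) with A·u = w. -/
/-!
`∑ i, ‖u i‖ ^ 2` is the quaternionic Hermitian form `star u ⬝ᵥ u`, which `A` preserves as soon as
`Aᴴ * A = 1`; this follows from `A * Aᴴ = 1` because matrix rings over a division ring are
Dedekind-finite. For transitivity it suffices to move every unit vector `u` to a basis vector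
`eᵢ`. A diagonal unitary makes the `i`-th coordinate of `u` real, and then the Householder
reflection along `v = u - eᵢ` sends `u` to `eᵢ`, because `2 (v* u) = v* v` exactly when that
coordinate is real.
-/

open Matrix

/-- `ℍ` denotes the real quaternions. -/
abbrev HQ : Type := Quaternion ℝ

instance : StarModule ℝ HQ := ⟨fun r a => by rw [Quaternion.star_smul, star_trivial r]⟩

theorem Quaternion.mem_unitary_of_norm_eq_one {q : HQ} (hq : ‖q‖ = 1) : q ∈ unitary HQ := by
  simp [Unitary.mem_iff, star_mul_self, self_mul_star, normSq_eq_norm_mul_self, hq]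

theorem Quaternion.exists_mem_unitary_star_mul_eq_norm (a : HQ) :
    ∃ q ∈ unitary HQ, star q * a = ‖a‖ := by
  rcases eq_or_ne a 0 with rfl | ha
  · exact ⟨1, one_mem _, by simp⟩
  have hn : ‖a‖ ≠ 0 := norm_ne_zero_iff.mpr ha
  refine ⟨(‖a‖⁻¹ : ℝ) • a, mem_unitary_of_norm_eq_one ?_, ?_⟩
  · rw [norm_smul, norm_inv, norm_norm, inv_mul_cancel₀ hn]
  · rw [star_smul, smul_mul_assoc, star_mul_self, normSq_eq_norm_mul_self, smul_coe,
      inv_mul_cancel_left₀ hn]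

theorem Quaternion.eq_coe_half_of_two_mul_eq_coe {x : HQ} {s : ℝ} (h : 2 * x = s) :
    x = ((s / 2 : ℝ) : HQ) := by
  have two : (2 : HQ) = ((2 : ℝ) : HQ) := by norm_cast
  rw [two, coe_mul_eq_smul] at h
  rw [div_eq_inv_mul, ← smul_coe, ← h, smul_smul, inv_mul_cancel₀ two_ne_zero, one_smul]

section

variable {ι : Type*} [Fintype ι]

theorem star_dotProduct_self_eq_sum_norm_sq (v : ι → HQ) :
    star v ⬝ᵥ v = ((∑ i, ‖v i‖ ^ 2 : ℝ) : HQ) := by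
  rw [← Quaternion.algebraMap_def, map_sum]
  simp [dotProduct, Quaternion.star_mul_self, Quaternion.normSq_eq_norm_mul_self, sq]

theorem eq_zero_of_sum_norm_sq_eq_zero {v : ι → HQ} (hv : ∑ i, ‖v i‖ ^ 2 = 0) : v = 0 := by
  funext i
  simpa using (Finset.sum_eq_zero_iff_of_nonneg (fun j _ => sq_nonneg ‖v j‖)).mp hv i
    (Finset.mem_univ i)

variable [DecidableEq ι]

theorem Matrix.mem_unitary_iff_mul_conjTranspose_eq_one {R : Type*} [Ring R] [StarRing R]
    [IsStablyFiniteRing R] {A : Matrix ι ι R} : A ∈ unitary (Matrix ι ι R) ↔ A * Aᴴ = 1 :=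
  ⟨And.right, fun h => ⟨mul_eq_one_comm.mp h, h⟩⟩

theorem Matrix.diagonal_mem_unitary {R : Type*} [Semiring R] [StarRing R] {d : ι → R}
    (hd : ∀ i, d i ∈ unitary R) : diagonal d ∈ unitary (Matrix ι ι R) := by
  simp only [Unitary.mem_iff, star_eq_conjTranspose, diagonal_conjTranspose,
    diagonal_mul_diagonal, Pi.star_apply, Unitary.star_mul_self_of_mem (hd _),
    Unitary.mul_star_self_of_mem (hd _), diagonal_one, and_self]

theorem sum_norm_sq_mulVec_of_mem_unitary {A : Matrix ι ι HQ} (hA : A ∈ unitary (Matrix ι ι HQ))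
    (u : ι → HQ) : ∑ i, ‖(A *ᵥ u) i‖ ^ 2 = ∑ i, ‖u i‖ ^ 2 := by
  have h : star (A *ᵥ u) ⬝ᵥ (A *ᵥ u) = star u ⬝ᵥ u := by
    rw [star_mulVec, dotProduct_mulVec, vecMul_vecMul, ← star_eq_conjTranspose,
      Unitary.star_mul_self_of_mem hA, vecMul_one]
  rw [star_dotProduct_self_eq_sum_norm_sq, star_dotProduct_self_eq_sum_norm_sq] at h
  exact Quaternion.coe_injective h

-- At `v = 0` the junk value `2 / 0 = 0` makes this the identity.
noncomputable def householder (v : ι → HQ) : Matrix ι ι HQ :=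
  1 - (2 / ∑ i, ‖v i‖ ^ 2) • vecMulVec v (star v)

theorem householder_conjTranspose (v : ι → HQ) : (householder v)ᴴ = householder v := by
  simp [householder, conjTranspose_smul]

theorem householder_mul_self (v : ι → HQ) : householder v * householder v = 1 := by
  set s := ∑ i, ‖v i‖ ^ 2 with hs_def
  rcases eq_or_ne s 0 with hs | hs
  · simp [householder, ← hs_def, hs]
  have hP : vecMulVec v (star v) * vecMulVec v (star v) = s • vecMulVec v (star v) := by
    rw [vecMulVec_mul_vecMulVec, star_dotProduct_self_eq_sum_norm_sq,
      ← Quaternion.algebraMap_def, algebraMap_smul, vecMulVec_smul]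
  have hc : (2 / s) * ((2 / s) * s) = 2 / s + 2 / s := by field_simp; ring
  simp only [householder, ← hs_def, sub_mul, mul_sub, one_mul, mul_one, Matrix.smul_mul,
    Matrix.mul_smul, hP, smul_smul, hc, add_smul]
  abel

theorem householder_mem_unitary (v : ι → HQ) : householder v ∈ unitary (Matrix ι ι HQ) := by
  rw [Unitary.mem_iff, star_eq_conjTranspose, householder_conjTranspose, and_self]
  exact householder_mul_self v

theorem householder_mulVec {v u : ι → HQ} (h : 2 * (star v ⬝ᵥ u) = star v ⬝ᵥ v) :
    householder v *ᵥ u = u - v := by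
  set s := ∑ i, ‖v i‖ ^ 2 with hs_def
  rcases eq_or_ne s 0 with hs | hs
  · simp [householder, eq_zero_of_sum_norm_sq_eq_zero hs]
  rw [star_dotProduct_self_eq_sum_norm_sq, ← hs_def] at h
  rw [householder, sub_mulVec, one_mulVec, smul_mulVec, vecMulVec_mulVec,
    Quaternion.eq_coe_half_of_two_mul_eq_coe h]
  congr 1
  funext i
  simp only [Pi.smul_apply, MulOpposite.smul_eq_mul_unop, MulOpposite.unop_op,
    Quaternion.mul_coe_eq_smul, smul_smul]
  rw [← hs_def, div_mul_div_cancel₀' two_ne_zero, div_self hs, one_smul]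

theorem householder_sub_single_mulVec {u : ι → HQ} (hu : ∑ j, ‖u j‖ ^ 2 = 1) {i : ι}
    (hi : star (u i) = u i) : householder (u - Pi.single i 1) *ᵥ u = Pi.single i 1 := by
  rw [householder_mulVec, sub_sub_cancel]
  have huu : star u ⬝ᵥ u = 1 := by
    rw [star_dotProduct_self_eq_sum_norm_sq, hu, Quaternion.coe_one]
  simp only [star_sub, ← Pi.single_star, star_one, sub_dotProduct, dotProduct_sub, huu,
    single_one_dotProduct, dotProduct_single_one, Pi.sub_apply, Pi.star_apply, hi,
    Pi.single_eq_same]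
  rw [two_mul]
  abel

theorem exists_mem_unitary_mulVec_apply_eq_norm (u : ι → HQ) (i : ι) :
    ∃ D ∈ unitary (Matrix ι ι HQ), (D *ᵥ u) i = ‖u i‖ := by
  obtain ⟨q, hq, hqu⟩ := Quaternion.exists_mem_unitary_star_mul_eq_norm (u i)
  refine ⟨diagonal (Function.update 1 i (star q)), diagonal_mem_unitary fun j => ?_, ?_⟩
  · rcases eq_or_ne j i with rfl | hj
    · simpa using Unitary.star_mem hq
    · simp [hj]
  · simp [mulVec_diagonal, hqu]

theorem exists_mem_unitary_mulVec_eq_single {u : ι → HQ} (hu : ∑ j, ‖u j‖ ^ 2 = 1) (i : ι) :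
    ∃ A ∈ unitary (Matrix ι ι HQ), A *ᵥ u = Pi.single i 1 := by
  obtain ⟨D, hD, hDu⟩ := exists_mem_unitary_mulVec_apply_eq_norm u i
  have hDu_sphere : ∑ j, ‖(D *ᵥ u) j‖ ^ 2 = 1 := by
    rw [sum_norm_sq_mulVec_of_mem_unitary hD, hu]
  refine ⟨householder (D *ᵥ u - Pi.single i 1) * D, mul_mem (householder_mem_unitary _) hD, ?_⟩
  rw [← mulVec_mulVec,
    householder_sub_single_mulVec hDu_sphere (by rw [hDu, Quaternion.star_coe])]

theorem exists_mem_unitary_mulVec_eq {u w : ι → HQ} (hu : ∑ j, ‖u j‖ ^ 2 = 1)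
    (hw : ∑ j, ‖w j‖ ^ 2 = 1) : ∃ A ∈ unitary (Matrix ι ι HQ), A *ᵥ u = w := by
  obtain ⟨i, -, -⟩ := Finset.exists_ne_zero_of_sum_ne_zero (hu ▸ one_ne_zero)
  obtain ⟨P, hP, hPu⟩ := exists_mem_unitary_mulVec_eq_single hu i
  obtain ⟨Q, hQ, hQw⟩ := exists_mem_unitary_mulVec_eq_single hw i
  refine ⟨star Q * P, mul_mem (Unitary.star_mem hQ) hP, ?_⟩
  rw [← mulVec_mulVec, hPu, ← hQw, mulVec_mulVec, Unitary.star_mul_self_of_mem hQ, one_mulVec]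

end

theorem sp_preserves_sphere_and_transitive_general (n : ℕ) :
    (∀ A : Matrix (Fin n) (Fin n) HQ, A * Aᴴ = 1 →
      ∀ u : Fin n → HQ, ∑ i, ‖u i‖ ^ 2 = 1 → ∑ i, ‖A.mulVec u i‖ ^ 2 = 1) ∧
    (∀ u w : Fin n → HQ, ∑ i, ‖u i‖ ^ 2 = 1 → ∑ i, ‖w i‖ ^ 2 = 1 →
      ∃ A : Matrix (Fin n) (Fin n) HQ, A * Aᴴ = 1 ∧ A.mulVec u = w) := by
  refine ⟨fun A hA u hu => ?_, fun u w hu hw => ?_⟩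
  · rw [sum_norm_sq_mulVec_of_mem_unitary (mem_unitary_iff_mul_conjTranspose_eq_one.mpr hA), hu]
  · obtain ⟨A, hA, hAu⟩ := exists_mem_unitary_mulVec_eq hu hw
    exact ⟨A, mem_unitary_iff_mul_conjTranspose_eq_one.mp hA, hAu⟩

/-- For `n ≥ 1`, matrix–vector multiplication by elements of `Sp(n)` (the quaternionic
unitary group, i.e. `A * Aᴴ = 1`) preserves the unit sphere
`S^{4n−1} = {u : Fin n → ℍ | ∑ i, ‖u i‖² = 1} ⊂ ℍⁿ`, and the resulting action is
transitive: for any `u, w ∈ S^{4n−1}` there exists `A ∈ Sp(n)` with `A ·ᵥ u = w`. -/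
theorem sp_preserves_sphere_and_transitive (n : ℕ) (hn : 1 ≤ n) :
    (∀ A : Matrix (Fin n) (Fin n) HQ, A * Aᴴ = 1 →
      ∀ u : Fin n → HQ, ∑ i, ‖u i‖ ^ 2 = 1 → ∑ i, ‖A.mulVec u i‖ ^ 2 = 1) ∧
    (∀ u w : Fin n → HQ, ∑ i, ‖u i‖ ^ 2 = 1 → ∑ i, ‖w i‖ ^ 2 = 1 →
      ∃ A : Matrix (Fin n) (Fin n) HQ, A * Aᴴ = 1 ∧ A.mulVec u = w) :=
  sp_preserves_sphere_and_transitive_general n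
end

section
/- For n ≥ 1, let e₀ ∈ ℍⁿ be the first standard basis vector. A matrix A ∈ Sp(n) satisfies A·e₀ = e₀ if and only if A is the block-diagonal matrix diag(1, B) for some B ∈ Sp(n−1) (that is, A₀₀ = 1, the remaining entries of the first row and first column vanish, and the lower-right (n−1)×(n−1) block B lies in Sp(n−1)). In particular the stabilizer of e₀ in Sp(n) is a subgroup isomorphic to Sp(n−1). -/
open Matrix

/-- `Sp(n)`, the quaternionic unitary group (matrices `A` over `ℍ` with `A * Aᴴ = 1`),
as a submonoid of the `n × n` quaternionic matrices. -/
noncomputable def SpM (n : ℕ) : Submonoid (Matrix (Fin n) (Fin n) HQ) where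
  carrier := {A | A * Aᴴ = 1}
  one_mem' := by simp
  mul_mem' := by
    intro a b ha hb
    simp only [Set.mem_setOf_eq] at ha hb ⊢
    rw [Matrix.conjTranspose_mul, mul_assoc, ← mul_assoc b, hb, one_mul, ha]

/-- The stabilizer of the first standard basis vector `e₀ = Pi.single 0 1` in `Sp(n+1)`,
as a submonoid of the `(n+1) × (n+1)` quaternionic matrices. -/
noncomputable def StabM (n : ℕ) : Submonoid (Matrix (Fin (n + 1)) (Fin (n + 1)) HQ) where
  carrier := {A | A * Aᴴ = 1 ∧ A.mulVec (Pi.single 0 1) = Pi.single 0 1}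
  one_mem' := ⟨by simp, Matrix.one_mulVec _⟩
  mul_mem' := by
    intro a b ha hb
    refine ⟨?_, ?_⟩
    · rw [Matrix.conjTranspose_mul, mul_assoc, ← mul_assoc b, hb.1, one_mul, ha.1]
    · rw [← Matrix.mulVec_mulVec, hb.2, ha.2]

/-!
If `A * Aᴴ = 1` and `A e₀ = e₀`, the first column of `A` is `e₀`, so `A 0 0 = 1`; the `(0, 0)`
entry of `A * Aᴴ = 1` then reads `1 + ∑_{j ≠ 0} ‖A 0 j‖² = 1`, so the rest of the first row
vanishes too. Hence `A = diag(1, B)` with `B * Bᴴ = 1`, and `A ↦ B` is multiplicative on the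
stabilizer, with inverse `B ↦ diag(1, B)`.
-/

namespace Quaternion

variable {R : Type*} [CommRing R] [LinearOrder R] [IsStrictOrderedRing R]

theorem sum_mul_star_eq_zero_iff {ι : Type*} {s : Finset ι} {x : ι → Quaternion R} :
    ∑ i ∈ s, x i * star (x i) = 0 ↔ ∀ i ∈ s, x i = 0 := by
  simp only [self_mul_star, ← algebraMap_def, ← map_sum, map_eq_zero_iff _ algebraMap_injective,
    Finset.sum_eq_zero_iff_of_nonneg fun i _ => normSq_nonneg, normSq_eq_zero]

end Quaternion

namespace Matrix

theorem mulVec_single_one_eq_single_one_iff {m R : Type*} [Fintype m] [DecidableEq m]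
    [NonAssocSemiring R] (A : Matrix m m R) (j : m) :
    A *ᵥ Pi.single j 1 = Pi.single j 1 ↔ A j j = 1 ∧ ∀ i ≠ j, A i j = 0 := by
  simp only [mulVec_single_one, funext_iff, col_apply, Pi.single_apply]
  exact ⟨fun h => ⟨by simpa using h j, fun i hi => by simpa [hi] using h i⟩,
    fun ⟨hjj, h⟩ i => by split_ifs with hi <;> simp_all⟩

theorem apply_eq_zero_of_mul_conjTranspose_eq_one {m n R : Type*} [Fintype n] [DecidableEq m]
    [CommRing R] [LinearOrder R] [IsStrictOrderedRing R] {A : Matrix m n (Quaternion R)}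
    (hA : A * Aᴴ = 1) {i : m} {k : n} (hk : A i k = 1) {j : n} (hj : j ≠ k) : A i j = 0 := by
  classical
  have hrow : ∑ l, A i l * star (A i l) = 1 := by
    simpa [mul_apply] using congrFun₂ hA i i
  rw [← Finset.add_sum_erase _ _ (Finset.mem_univ k), hk, one_mul, star_one, add_eq_left,
    Quaternion.sum_mul_star_eq_zero_iff] at hrow
  exact hrow j (Finset.mem_erase.2 ⟨hj, Finset.mem_univ j⟩)

theorem submatrix_succ_mul {l o l' o' R : Type*} [NonUnitalNonAssocSemiring R] {k : ℕ}
    (A : Matrix l (Fin (k + 1)) R) (C : Matrix (Fin (k + 1)) o R) (r : l' → l) (c : o' → o)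
    (hA : ∀ i, A (r i) 0 = 0) :
    (A * C).submatrix r c = A.submatrix r Fin.succ * C.submatrix Fin.succ c := by
  ext i j
  simp [mul_apply, Fin.sum_univ_succ, hA]

end Matrix

section BlockDiag

variable {R : Type*} {n : ℕ}

def finSuccEquivSumUnit (n : ℕ) : Fin (n + 1) ≃ Fin n ⊕ Unit :=
  (finSuccEquiv n).trans (Equiv.optionEquivSumPUnit.{0} _)

@[simp] theorem finSuccEquivSumUnit_zero : finSuccEquivSumUnit n 0 = .inr () := by
  simp [finSuccEquivSumUnit]

@[simp] theorem finSuccEquivSumUnit_succ (p : Fin n) : finSuccEquivSumUnit n p.succ = .inl p := by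
  simp [finSuccEquivSumUnit]

/-- `diag(1, B)`, encoded as `fromBlocks B 0 0 1` with the `Unit` index moved to position `0`. -/
def oneBlockDiag [Zero R] [One R] (B : Matrix (Fin n) (Fin n) R) :
    Matrix (Fin (n + 1)) (Fin (n + 1)) R :=
  (fromBlocks B 0 0 (1 : Matrix Unit Unit R)).submatrix (finSuccEquivSumUnit n)
    (finSuccEquivSumUnit n)

section ZeroOne

variable [Zero R] [One R] (B : Matrix (Fin n) (Fin n) R)

@[simp] theorem oneBlockDiag_zero_zero : oneBlockDiag B 0 0 = 1 := by simp [oneBlockDiag]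

@[simp] theorem oneBlockDiag_zero_succ (q : Fin n) : oneBlockDiag B 0 q.succ = 0 := by
  simp [oneBlockDiag]

@[simp] theorem oneBlockDiag_succ_zero (p : Fin n) : oneBlockDiag B p.succ 0 = 0 := by
  simp [oneBlockDiag]

@[simp] theorem oneBlockDiag_succ_succ (p q : Fin n) : oneBlockDiag B p.succ q.succ = B p q := by
  simp [oneBlockDiag]

theorem submatrix_succ_oneBlockDiag : (oneBlockDiag B).submatrix Fin.succ Fin.succ = B := by
  ext p q
  simp

theorem oneBlockDiag_submatrix_succ {A : Matrix (Fin (n + 1)) (Fin (n + 1)) R} (h00 : A 0 0 = 1)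
    (hrc : ∀ j ≠ 0, A 0 j = 0 ∧ A j 0 = 0) : oneBlockDiag (A.submatrix Fin.succ Fin.succ) = A := by
  ext i j
  cases i using Fin.cases <;> cases j using Fin.cases <;>
    simp [h00, (hrc _ (Fin.succ_ne_zero _)).1, (hrc _ (Fin.succ_ne_zero _)).2]

theorem oneBlockDiag_one : oneBlockDiag (1 : Matrix (Fin n) (Fin n) R) = 1 := by
  rw [oneBlockDiag, fromBlocks_one, submatrix_one_equiv]

end ZeroOne

theorem oneBlockDiag_mul [Semiring R] (B C : Matrix (Fin n) (Fin n) R) :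
    oneBlockDiag B * oneBlockDiag C = oneBlockDiag (B * C) := by
  rw [oneBlockDiag, oneBlockDiag, submatrix_mul_equiv, fromBlocks_multiply]
  simp [oneBlockDiag]

theorem conjTranspose_oneBlockDiag [Semiring R] [StarRing R] (B : Matrix (Fin n) (Fin n) R) :
    (oneBlockDiag B)ᴴ = oneBlockDiag Bᴴ := by
  rw [oneBlockDiag, conjTranspose_submatrix, fromBlocks_conjTranspose]
  simp [oneBlockDiag]

end BlockDiag

section Stabilizer

variable {n : ℕ}

theorem row_col_zero_of_mem_StabM {A : Matrix (Fin (n + 1)) (Fin (n + 1)) HQ} (hA : A ∈ StabM n) :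
    A 0 0 = 1 ∧ ∀ j ≠ 0, A 0 j = 0 ∧ A j 0 = 0 := by
  obtain ⟨h00, hcol⟩ := (mulVec_single_one_eq_single_one_iff A 0).1 hA.2
  exact ⟨h00, fun j hj => ⟨apply_eq_zero_of_mul_conjTranspose_eq_one hA.1 h00 hj, hcol j hj⟩⟩

theorem submatrix_succ_mul_of_mem_StabM {A : Matrix (Fin (n + 1)) (Fin (n + 1)) HQ}
    (hA : A ∈ StabM n) (C : Matrix (Fin (n + 1)) (Fin (n + 1)) HQ) :
    (A * C).submatrix Fin.succ Fin.succ =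
      A.submatrix Fin.succ Fin.succ * C.submatrix Fin.succ Fin.succ :=
  submatrix_succ_mul A C _ _ fun p => ((row_col_zero_of_mem_StabM hA).2 _ (Fin.succ_ne_zero p)).2

theorem submatrix_succ_mem_SpM {A : Matrix (Fin (n + 1)) (Fin (n + 1)) HQ} (hA : A ∈ StabM n) :
    A.submatrix Fin.succ Fin.succ ∈ SpM n := by
  change _ * _ = _
  rw [conjTranspose_submatrix, ← submatrix_succ_mul_of_mem_StabM hA, hA.1,
    submatrix_one _ (Fin.succ_injective n)]

theorem oneBlockDiag_mem_StabM {B : Matrix (Fin n) (Fin n) HQ} (hB : B ∈ SpM n) :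
    oneBlockDiag B ∈ StabM n := by
  refine ⟨?_, (mulVec_single_one_eq_single_one_iff _ 0).2 ⟨oneBlockDiag_zero_zero B, ?_⟩⟩
  · rw [conjTranspose_oneBlockDiag, oneBlockDiag_mul, hB, oneBlockDiag_one]
  · intro i hi
    obtain ⟨p, rfl⟩ := Fin.exists_succ_eq.2 hi
    exact oneBlockDiag_succ_zero B p

noncomputable def stabMEquivSpM (n : ℕ) : StabM n ≃* SpM n where
  toFun A := ⟨A.1.submatrix Fin.succ Fin.succ, submatrix_succ_mem_SpM A.2⟩
  invFun B := ⟨oneBlockDiag B.1, oneBlockDiag_mem_StabM B.2⟩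
  left_inv A := Subtype.ext <| oneBlockDiag_submatrix_succ (row_col_zero_of_mem_StabM A.2).1
    (row_col_zero_of_mem_StabM A.2).2
  right_inv B := Subtype.ext <| submatrix_succ_oneBlockDiag B.1
  map_mul' A C := Subtype.ext <| submatrix_succ_mul_of_mem_StabM A.2 C.1

end Stabilizer

/-- For `n ≥ 1` (here the size is written as `n + 1`), a matrix `A ∈ Sp(n+1)` fixes the
first standard basis vector `e₀` if and only if `A = diag(1, B)` for some `B ∈ Sp(n)`:
`A₀₀ = 1`, the remaining entries of the first row and column vanish, and the lower-right
`n × n` block lies in `Sp(n)`.  In particular the stabilizer of `e₀` in `Sp(n+1)` is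
isomorphic to `Sp(n)`. -/
theorem sp_stabilizer_basis_vector (n : ℕ) (A : Matrix (Fin (n + 1)) (Fin (n + 1)) HQ)
    (hA : A * Aᴴ = 1) :
    (A.mulVec (Pi.single 0 1) = Pi.single 0 1 ↔
      (A 0 0 = 1 ∧ (∀ j : Fin (n + 1), j ≠ 0 → A 0 j = 0 ∧ A j 0 = 0) ∧
        ∃ B : Matrix (Fin n) (Fin n) HQ, B * Bᴴ = 1 ∧
          ∀ p q : Fin n, A p.succ q.succ = B p q)) ∧
    Nonempty (StabM n ≃* SpM n) := by
  refine ⟨⟨fun he => ?_, fun ⟨h00, hrc, _⟩ => ?_⟩, ⟨stabMEquivSpM n⟩⟩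
  · have hmem : A ∈ StabM n := ⟨hA, he⟩
    obtain ⟨h00, hrc⟩ := row_col_zero_of_mem_StabM hmem
    exact ⟨h00, hrc, A.submatrix Fin.succ Fin.succ, submatrix_succ_mem_SpM hmem, fun _ _ => rfl⟩
  · exact (mulVec_single_one_eq_single_one_iff A 0).2 ⟨h00, fun j hj => (hrc j hj).2⟩
end

section
/- Quaternionic projective space ℍPⁿ (the quotient of (Fin (n+1) → ℍ) \ {0} by componentwise right multiplication by nonzero quaternions, with the quotient topology) is a compact Hausdorff topological space. -/
open Matrix

/-- The nonzero vectors of `Fin (n+1) → ℍ`, with the subspace topology. -/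
def PV (n : ℕ) : Type := {Z : Fin (n + 1) → HQ // Z ≠ 0}

instance (n : ℕ) : TopologicalSpace (PV n) :=
  inferInstanceAs (TopologicalSpace {Z : Fin (n + 1) → HQ // Z ≠ 0})

/-- The relation `Z ∼ Z·q` of componentwise right scalar multiplication by a nonzero
quaternion `q`. -/
def projRel (n : ℕ) (Z W : PV n) : Prop :=
  ∃ q : HQ, q ≠ 0 ∧ W.val = fun i => Z.val i * q

/-- Quaternionic projective space `ℍPⁿ`: the quotient of the nonzero vectors of
`Fin (n+1) → ℍ` by componentwise right multiplication by nonzero quaternions, with the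
quotient topology. -/
def HP (n : ℕ) : Type := Quot (projRel n)

instance (n : ℕ) : TopologicalSpace (HP n) :=
  inferInstanceAs (TopologicalSpace (Quot (projRel n)))

/-- The class `[Z₀ : … : Zₙ] ∈ ℍPⁿ` of a nonzero vector `Z`. -/
def HPmk {n : ℕ} (Z : Fin (n + 1) → HQ) (h : Z ≠ 0) : HP n := Quot.mk _ ⟨Z, h⟩

/-! The map `[Z] ↦ Z Z* / |Z|²` to quaternionic matrices is well defined and continuous, and it
is injective because a nonzero column `Z (Z j)*` of the projector recovers `Z` up to a right
scalar; hence `ℍPⁿ` is Hausdorff. Every class has a representative on the unit sphere, so `ℍPⁿ`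
is a continuous image of a compact space. -/

open Quaternion Function

namespace QuaternionicProjective

variable {ι : Type*} [Fintype ι]

noncomputable def lineProjector (Z : ι → ℍ[ℝ]) : Matrix ι ι ℍ[ℝ] :=
  (∑ k, normSq (Z k))⁻¹ • vecMulVec Z (star Z)

theorem sum_normSq_ne_zero {Z : ι → ℍ[ℝ]} (hZ : Z ≠ 0) : ∑ k, normSq (Z k) ≠ 0 := by
  rw [Ne, Finset.sum_eq_zero_iff_of_nonneg fun k _ => normSq_nonneg]
  exact fun h => hZ (funext fun k => normSq_eq_zero.mp (h k (Finset.mem_univ k)))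

theorem lineProjector_mul_right (Z : ι → ℍ[ℝ]) {q : ℍ[ℝ]} (hq : q ≠ 0) :
    lineProjector (fun i => Z i * q) = lineProjector Z := by
  have hvec : vecMulVec (fun i => Z i * q) (star fun i => Z i * q) =
      normSq q • vecMulVec Z (star Z) := Matrix.ext fun i j => by
    simp only [vecMulVec_apply, Pi.star_apply, star_mul, Matrix.smul_apply]
    rw [mul_assoc, ← mul_assoc q, self_mul_star, ← mul_assoc, mul_coe_eq_smul, smul_mul_assoc]
  have hq' : normSq q ≠ 0 := normSq_ne_zero.mpr hq
  simp only [lineProjector, map_mul, ← Finset.sum_mul, hvec, smul_smul]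
  field_simp

theorem continuousOn_lineProjector : ContinuousOn (lineProjector (ι := ι)) {0}ᶜ :=
  .smul ((continuous_finsetSum _ fun k _ => continuous_normSq.comp (continuous_apply k))
      |>.continuousOn.inv₀ fun _ hZ => sum_normSq_ne_zero hZ)
    (continuous_id.matrix_vecMulVec continuous_star).continuousOn

theorem exists_eq_mul_right_of_lineProjector_eq {Z W : ι → ℍ[ℝ]} (hZ : Z ≠ 0) (hW : W ≠ 0)
    (h : lineProjector Z = lineProjector W) : ∃ q ≠ 0, W = fun i => Z i * q := by
  set s := (∑ k, normSq (Z k))⁻¹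
  set t := (∑ k, normSq (W k))⁻¹
  have hs : s ≠ 0 := inv_ne_zero (sum_normSq_ne_zero hZ)
  have ht : t ≠ 0 := inv_ne_zero (sum_normSq_ne_zero hW)
  have hentry : ∀ i j, s • (Z i * star (Z j)) = t • (W i * star (W j)) := fun i j =>
    congrFun (congrFun h i) j
  obtain ⟨j, hZj⟩ : ∃ j, Z j ≠ 0 := Function.ne_iff.mp hZ
  have hWj : W j ≠ 0 := by
    intro hWj
    simpa [hWj, hs, hZj] using hentry j j
  refine ⟨(t⁻¹ * s) • (star (Z j) * (star (W j))⁻¹),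
    smul_ne_zero (mul_ne_zero (inv_ne_zero ht) hs) (by simp [hZj, hWj]), ?_⟩
  funext i
  rw [mul_smul_comm, ← mul_assoc, mul_smul, ← smul_mul_assoc s, hentry, smul_mul_assoc,
    smul_smul, inv_mul_cancel₀ ht, one_smul, mul_assoc, mul_inv_cancel₀ (star_ne_zero.mpr hWj),
    mul_one]

end QuaternionicProjective

namespace HP

open QuaternionicProjective

variable {n : ℕ}

noncomputable def projector : HP n → Matrix (Fin (n + 1)) (Fin (n + 1)) ℍ[ℝ] :=
  Quot.lift (fun Z : PV n => lineProjector Z.val) fun Z _ ⟨_, hq, hW⟩ => by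
    rw [hW, lineProjector_mul_right Z.val hq]

theorem continuous_projector : Continuous (projector (n := n)) :=
  continuous_quot_lift _ (continuousOn_iff_continuous_domRestrict.mp continuousOn_lineProjector)

theorem projector_injective : Injective (projector (n := n)) := by
  rintro ⟨Z, hZ⟩ ⟨W, hW⟩ h
  exact Quot.sound (exists_eq_mul_right_of_lineProjector_eq hZ hW h)

instance : T2Space (HP n) := .of_injective_continuous projector_injective continuous_projector

theorem surjective_mk_unitSphere :
    Surjective fun Z : Metric.sphere (0 : Fin (n + 1) → ℍ[ℝ]) 1 =>
      HPmk Z.val (ne_zero_of_mem_unit_sphere Z) := by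
  rintro ⟨Z, hZ⟩
  have hZ' : ‖Z‖ ≠ 0 := norm_ne_zero_iff.mpr hZ
  have hq : (‖Z‖ : ℍ[ℝ]) ≠ 0 := by rwa [Ne, ← coe_zero, coe_inj]
  refine ⟨⟨‖Z‖⁻¹ • Z, by simp [norm_smul, hZ']⟩, Quot.sound ⟨‖Z‖, hq, funext fun i => ?_⟩⟩
  simp [mul_coe_eq_smul, smul_smul, hZ']

instance : CompactSpace (HP n) :=
  surjective_mk_unitSphere.compactSpace <|
    continuous_quot_mk.comp (continuous_subtype_val.subtype_mk _)

end HP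

/-- Quaternionic projective space `ℍPⁿ` is a compact Hausdorff topological space. -/
theorem hp_compactSpace_t2Space (n : ℕ) : CompactSpace (HP n) ∧ T2Space (HP n) :=
  ⟨inferInstance, inferInstance⟩
end

section
/- For n ≥ 1, define F : S^{4n−1} × [0,1] → ℍPⁿ by F(u, 0) = [1 : 0 : … : 0], F(u, s) = [√((1−s)/s) : u₁ : … : uₙ] for 0 < s < 1, and F(u, 1) = [0 : u₁ : … : uₙ]. Then F is continuous and surjective. -/
open Matrix

/-- The unit sphere `S^{4n−1} = {u : Fin n → ℍ | ∑ i, ‖u i‖² = 1} ⊂ ℍⁿ`. -/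
def Sph (n : ℕ) : Type := {u : Fin n → HQ // ∑ i, ‖u i‖ ^ 2 = 1}

instance (n : ℕ) : TopologicalSpace (Sph n) :=
  inferInstanceAs (TopologicalSpace {u : Fin n → HQ // ∑ i, ‖u i‖ ^ 2 = 1})

lemma cons_one_ne_zero {n : ℕ} (w : Fin n → HQ) : (Fin.cons 1 w : Fin (n + 1) → HQ) ≠ 0 := by
  intro h
  have := congrFun h 0
  simp at this

lemma cons_coe_ne_zero {n : ℕ} (u : Fin n → HQ) {c : ℝ} (hc : c ≠ 0) :
    (Fin.cons (c : HQ) u : Fin (n + 1) → HQ) ≠ 0 := by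
  intro h
  have := congrFun h 0
  simp only [Fin.cons_zero, Pi.zero_apply] at this
  exact hc (Quaternion.coe_injective (by simpa using this))

lemma cons_zero_ne_zero {n : ℕ} (u : Fin n → HQ) (hu : ∑ i, ‖u i‖ ^ 2 = 1) :
    (Fin.cons 0 u : Fin (n + 1) → HQ) ≠ 0 := by
  intro h
  have hz : u = 0 := funext fun i => by simpa using congrFun h i.succ
  rw [hz] at hu
  simp at hu

/-- The map `F : S^{4n−1} × [0,1] → ℍPⁿ` given by `F(u, 0) = [1 : 0 : … : 0]`,
`F(u, s) = [√((1−s)/s) : u₁ : … : uₙ]` for `0 < s < 1`, and `F(u, 1) = [0 : u₁ : … : uₙ]`. -/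
noncomputable def Fmap (n : ℕ) (u : Sph n) (s : Set.Icc (0 : ℝ) 1) : HP n :=
  if h0 : (s : ℝ) = 0 then HPmk (Fin.cons 1 0) (cons_one_ne_zero 0)
  else if h1 : (s : ℝ) = 1 then HPmk (Fin.cons 0 u.val) (cons_zero_ne_zero u.val u.prop)
  else HPmk (Fin.cons ((Real.sqrt ((1 - s) / s) : ℝ) : HQ) u.val)
    (cons_coe_ne_zero u.val (ne_of_gt (Real.sqrt_pos.mpr
      (div_pos (by have := s.2.2; cases lt_or_eq_of_le this with
                   | inl h => linarith
                   | inr h => exact absurd h h1)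
        (lt_of_le_of_ne s.2.1 (Ne.symm h0))))))

/-!
Multiplying the representative `(√((1 - s)/s), u)` on the right by `√s` gives
`(√(1 - s), √s · u)`, which also represents both endpoint values and is continuous on all of
`S^{4n-1} × [0,1]`; so `F` factors through a continuous map into nonzero vectors.
Conversely, every class has a unit representative `(t, v)` with `t` real and nonnegative
(right-multiply by the conjugate of the first coordinate, then normalize), and this is the
lift at `s = ‖v‖² = 1 - t²`, `u = v / √s` (any `u` when `s = 0`).
-/

lemma sum_norm_mul_right_sq {ι 𝕜 : Type*} [Fintype ι] [NormedDivisionRing 𝕜] (v : ι → 𝕜)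
    (q : 𝕜) : ∑ i, ‖v i * q‖ ^ 2 = ‖q‖ ^ 2 * ∑ i, ‖v i‖ ^ 2 := by
  simp only [norm_mul, mul_pow, Finset.mul_sum, mul_comm]

lemma sum_norm_sq_pos {ι E : Type*} [Fintype ι] [NormedAddCommGroup E] {v : ι → E}
    (hv : v ≠ 0) : 0 < ∑ i, ‖v i‖ ^ 2 := by
  obtain ⟨j, hj⟩ := Function.ne_iff.mp hv
  exact Finset.sum_pos' (fun i _ => by positivity)
    ⟨j, Finset.mem_univ j, pow_pos (norm_pos_iff.mpr hj) 2⟩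

@[simp]
lemma Quaternion.coe_eq_zero {r : ℝ} : (r : HQ) = 0 ↔ r = 0 :=
  Quaternion.coe_inj

lemma Quaternion.exists_mul_eq_coe_nonneg (a : HQ) : ∃ q ≠ 0, ∃ t : ℝ, 0 ≤ t ∧ a * q = t := by
  rcases eq_or_ne a 0 with rfl | ha
  · exact ⟨1, one_ne_zero, 0, le_rfl, by simp⟩
  · exact ⟨star a, star_ne_zero.mpr ha, _, Quaternion.normSq_nonneg, Quaternion.self_mul_star a⟩

lemma exists_mul_right_normalized {ι : Type*} [Fintype ι] {Z : ι → HQ} (hZ : Z ≠ 0) (i₀ : ι) :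
    ∃ q ≠ 0, ∃ t : ℝ, 0 ≤ t ∧ Z i₀ * q = t ∧ ∑ i, ‖Z i * q‖ ^ 2 = 1 := by
  obtain ⟨q₀, hq₀, t₀, ht₀, hZq₀⟩ := (Z i₀).exists_mul_eq_coe_nonneg
  have hW : (fun i => Z i * q₀) ≠ 0 := fun h =>
    hZ (funext fun i => (mul_eq_zero.mp (congrFun h i)).resolve_right hq₀)
  set r := √(∑ i, ‖Z i * q₀‖ ^ 2)
  have hr : 0 < r := Real.sqrt_pos.mpr (sum_norm_sq_pos hW)
  refine ⟨q₀ * (r⁻¹ : ℝ), mul_ne_zero hq₀ (by simpa using hr.ne'), t₀ / r,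
    div_nonneg ht₀ hr.le, by rw [← mul_assoc, hZq₀, div_eq_mul_inv, Quaternion.coe_mul], ?_⟩
  simp_rw [← mul_assoc]
  rw [sum_norm_mul_right_sq, Quaternion.norm_coe, Real.norm_eq_abs, sq_abs, inv_pow,
    ← Real.sq_sqrt (Finset.sum_nonneg fun i _ => by positivity : 0 ≤ ∑ i, ‖Z i * q₀‖ ^ 2)]
  exact inv_mul_cancel₀ (by positivity)

lemma Sph.val_ne_zero {n : ℕ} (u : Sph n) : u.val ≠ 0 := by
  intro h
  simpa [h] using u.prop

lemma Sph.nonempty {n : ℕ} (hn : 1 ≤ n) : Nonempty (Sph n) :=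
  ⟨⟨Pi.single ⟨0, hn⟩ 1, by simp [Pi.single_apply, apply_ite (fun x : HQ => ‖x‖ ^ 2)]⟩⟩

lemma HPmk_eq_of_eq_mul_right {n : ℕ} {Z W : Fin (n + 1) → HQ} (hZ : Z ≠ 0) (hW : W ≠ 0)
    {q : HQ} (hq : q ≠ 0) (h : ∀ i, W i = Z i * q) : HPmk Z hZ = HPmk W hW :=
  Quot.sound ⟨q, hq, funext h⟩

/-- Unlike the representative used to define `Fmap`, this one depends continuously on `s`
at `s = 0`. -/
noncomputable def fmapLift {n : ℕ} (u : Sph n) (s : Set.Icc (0 : ℝ) 1) : Fin (n + 1) → HQ :=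
  Fin.cons (√(1 - s) : HQ) fun i => u.val i * (√s : ℝ)

lemma fmapLift_ne_zero {n : ℕ} (u : Sph n) (s : Set.Icc (0 : ℝ) 1) : fmapLift u s ≠ 0 := by
  intro h
  have hsqrt : √(1 - s) = 0 := by simpa [fmapLift] using congrFun h 0
  have hs : (s : ℝ) = 1 := by linarith [Real.sqrt_eq_zero'.mp hsqrt, s.2.2]
  exact u.val_ne_zero (funext fun i => by simpa [fmapLift, hs] using congrFun h i.succ)

lemma continuous_fmapLift (n : ℕ) :
    Continuous fun p : Sph n × Set.Icc (0 : ℝ) 1 => fmapLift p.1 p.2 := by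
  have hcoe := Quaternion.continuous_coe
  refine .finCons (by fun_prop) (continuous_pi fun i => .mul ?_ (by fun_prop))
  exact (continuous_apply i).comp (continuous_subtype_val.comp continuous_fst)

lemma Fmap_eq_HPmk_fmapLift {n : ℕ} (u : Sph n) (s : Set.Icc (0 : ℝ) 1) :
    Fmap n u s = HPmk (fmapLift u s) (fmapLift_ne_zero u s) := by
  obtain ⟨s, hs0, hs1⟩ := s
  unfold Fmap
  split_ifs with h0 h1
  · obtain rfl : s = 0 := h0
    congr 1
    funext i
    cases i using Fin.cases <;> simp [fmapLift]
  · obtain rfl : s = 1 := h1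
    congr 1
    funext i
    cases i using Fin.cases <;> simp [fmapLift]
  · have hs : 0 < s := lt_of_le_of_ne hs0 (Ne.symm h0)
    refine HPmk_eq_of_eq_mul_right _ _ (q := (√s : ℝ))
      (by simpa using Real.sqrt_ne_zero'.mpr hs) fun i => ?_
    cases i using Fin.cases
    · simp [fmapLift, ← Quaternion.coe_mul,
        ← Real.sqrt_mul (div_nonneg (sub_nonneg.mpr hs1) hs.le), div_mul_cancel₀ _ hs.ne']
    · rfl

lemma exists_fmapLift_eq_cons {n : ℕ} (hn : 1 ≤ n) {t : ℝ} (ht : 0 ≤ t) {v : Fin n → HQ}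
    (hv : t ^ 2 + ∑ i, ‖v i‖ ^ 2 = 1) : ∃ u s, fmapLift u s = Fin.cons (t : HQ) v := by
  set S := ∑ i, ‖v i‖ ^ 2
  have hS0 : 0 ≤ S := Finset.sum_nonneg fun i _ => by positivity
  obtain ⟨u, hu⟩ : ∃ u : Sph n, ∀ i, u.val i * (√S : ℝ) = v i := by
    rcases eq_or_ne v 0 with rfl | hv0
    · obtain ⟨u⟩ := Sph.nonempty hn
      exact ⟨u, fun i => by simp [S]⟩
    · have hS : 0 < S := sum_norm_sq_pos hv0
      refine ⟨⟨fun i => v i * ((√S)⁻¹ : ℝ), ?_⟩, fun i => ?_⟩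
      · rw [sum_norm_mul_right_sq, Quaternion.norm_coe, Real.norm_eq_abs, sq_abs, inv_pow,
          Real.sq_sqrt hS.le]
        exact inv_mul_cancel₀ hS.ne'
      · rw [mul_assoc, ← Quaternion.coe_mul, inv_mul_cancel₀ (Real.sqrt_pos.mpr hS).ne',
          Quaternion.coe_one, mul_one]
  refine ⟨u, ⟨S, hS0, by nlinarith⟩, Fin.cons_inj.mpr ⟨?_, funext hu⟩⟩
  simp [show 1 - S = t ^ 2 by linarith, Real.sqrt_sq ht]

/-- For `n ≥ 1`, the map `F : S^{4n−1} × [0,1] → ℍPⁿ` is continuous and surjective. -/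
theorem fmap_continuous_surjective (n : ℕ) (hn : 1 ≤ n) :
    Continuous (fun p : Sph n × (Set.Icc (0 : ℝ) 1) => Fmap n p.1 p.2) ∧
    Function.Surjective (fun p : Sph n × (Set.Icc (0 : ℝ) 1) => Fmap n p.1 p.2) := by
  simp only [Fmap_eq_HPmk_fmapLift]
  refine ⟨continuous_quot_mk.comp ((continuous_fmapLift n).subtype_mk _), ?_⟩
  rintro ⟨Z, hZ⟩
  obtain ⟨q, hq, t, ht, hZ0, hunit⟩ := exists_mul_right_normalized hZ 0
  obtain ⟨u, s, hus⟩ := exists_fmapLift_eq_cons hn ht (v := fun i => Z i.succ * q) <| by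
    rwa [Fin.sum_univ_succ, hZ0, Quaternion.norm_coe, Real.norm_eq_abs, sq_abs] at hunit
  refine ⟨(u, s), (HPmk_eq_of_eq_mul_right hZ _ hq fun i => ?_).symm⟩
  rw [hus]
  cases i using Fin.cases
  · exact hZ0.symm
  · rfl
end

section
/- For n ≥ 1, let ∼ be the equivalence relation on S^{4n−1} × [0,1] generated by (u, 0) ∼ (u', 0) for all u, u', and (u, 1) ∼ (u·q, 1) for all unit quaternions q. Then the map F(u, 0) = [1 : 0 : … : 0], F(u, s) = [√((1−s)/s) : u₁ : … : uₙ] for 0 < s < 1, F(u, 1) = [0 : u₁ : … : uₙ] descends to a homeomorphism from the quotient space (S^{4n−1} × [0,1])/∼ (with the quotient topology) onto ℍPⁿ. (This realizes the closure of the stratum X₀₁ of D Sp(n)_impl as the quaternionic projective space ℍPⁿ.) -/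
open Matrix

/-- The relation on `S^{4n−1} × [0,1]` generating the equivalence relation `∼`:
`(u, 0) ∼ (u', 0)` for all `u, u'`, and `(u, 1) ∼ (u·q, 1)` for all unit quaternions
`q`.  The quotient `Quot` of this relation is the quotient by the generated
equivalence relation. -/
def strRel (n : ℕ) (p p' : Sph n × (Set.Icc (0 : ℝ) 1)) : Prop :=
  ((p.2 : ℝ) = 0 ∧ (p'.2 : ℝ) = 0) ∨
    ((p.2 : ℝ) = 1 ∧ (p'.2 : ℝ) = 1 ∧
      ∃ q : HQ, ‖q‖ = 1 ∧ p'.1.val = fun i => p.1.val i * q)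


/-! ### Auxiliary lemmas -/

section Aux

open scoped Quaternion

lemma sum_sq_pos {m : ℕ} {Z : Fin m → HQ} (hZ : Z ≠ 0) : 0 < ∑ i, ‖Z i‖ ^ 2 := by
  obtain ⟨k, hk⟩ := Function.ne_iff.mp hZ
  refine Finset.sum_pos' (fun i _ => by positivity) ⟨k, Finset.mem_univ k, ?_⟩
  exact pow_pos (norm_pos_iff.mpr hk) 2

lemma projRel_equivalence (n : ℕ) : Equivalence (projRel n) := by
  refine ⟨fun Z => ⟨1, one_ne_zero, by simp⟩, ?_, ?_⟩
  · rintro Z W ⟨q, hq, hW⟩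
    refine ⟨q⁻¹, inv_ne_zero hq, funext fun i => ?_⟩
    rw [hW]
    simp [mul_assoc, mul_inv_cancel₀ hq]
  · rintro Z W X ⟨q, hq, hW⟩ ⟨r, hr, hX⟩
    refine ⟨q * r, mul_ne_zero hq hr, funext fun i => ?_⟩
    rw [hX, hW]
    simp [mul_assoc]

lemma norm_sq_hq (a : HQ) : ‖a‖ ^ 2 = Quaternion.normSq a := by
  rw [sq, ← Quaternion.normSq_eq_norm_mul_self]

/-- The "projection matrix" invariant of a projective class. -/
noncomputable def Pmat (n : ℕ) (Z : PV n) : Fin (n + 1) → Fin (n + 1) → HQ :=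
  fun i j => (∑ k, ‖Z.val k‖ ^ 2)⁻¹ • (Z.val i * star (Z.val j))

lemma Pmat_continuous (n : ℕ) : Continuous (Pmat n) := by
  refine continuous_pi fun i => continuous_pi fun j => ?_
  have hv : Continuous (fun Z : PV n => Z.val) := continuous_subtype_val
  have hsum : Continuous (fun Z : PV n => ∑ k, ‖Z.val k‖ ^ 2) :=
    continuous_finset_sum _ fun k _ => ((continuous_apply k).comp hv).norm.pow 2
  have hinv : Continuous (fun Z : PV n => (∑ k, ‖Z.val k‖ ^ 2)⁻¹) :=
    hsum.inv₀ fun Z => (sum_sq_pos Z.prop).ne'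
  exact hinv.smul (((continuous_apply i).comp hv).mul ((continuous_apply j).comp hv).star)

lemma Pmat_respects (n : ℕ) : ∀ Z W, projRel n Z W → Pmat n Z = Pmat n W := by
  rintro Z W ⟨q, hq, hW⟩
  have hq2 : (0 : ℝ) < ‖q‖ ^ 2 := pow_pos (norm_pos_iff.mpr hq) 2
  funext i j
  simp only [Pmat, hW]
  have hsum : ∑ k, ‖Z.val k * q‖ ^ 2 = (∑ k, ‖Z.val k‖ ^ 2) * ‖q‖ ^ 2 := by
    rw [Finset.sum_mul]
    exact Finset.sum_congr rfl fun k _ => by rw [norm_mul, mul_pow]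
  have hmid : Z.val i * q * star (Z.val j * q) = (‖q‖ ^ 2) • (Z.val i * star (Z.val j)) := by
    rw [StarMul.star_mul, show Z.val i * q * (star q * star (Z.val j))
          = Z.val i * (q * star q) * star (Z.val j) by noncomm_ring,
        Quaternion.self_mul_star, ← norm_sq_hq,
        Quaternion.mul_coe_eq_smul, smul_mul_assoc]
  rw [hsum, hmid, smul_smul]
  congr 1
  rw [mul_inv, mul_assoc, inv_mul_cancel₀ hq2.ne', mul_one]

lemma Pmat_inj (n : ℕ) {Z W : PV n} (h : Pmat n Z = Pmat n W) : projRel n Z W := by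
  obtain ⟨j, hj⟩ := Function.ne_iff.mp Z.prop
  have hj : Z.val j ≠ 0 := hj
  have ha0 : 0 < ∑ k, ‖Z.val k‖ ^ 2 := sum_sq_pos Z.prop
  have hb0 : 0 < ∑ k, ‖W.val k‖ ^ 2 := sum_sq_pos W.prop
  set a := ∑ k, ‖Z.val k‖ ^ 2
  set b := ∑ k, ‖W.val k‖ ^ 2
  have hWj : W.val j ≠ 0 := by
    intro h0
    have hjj : a⁻¹ • (Z.val j * star (Z.val j)) = b⁻¹ • (W.val j * star (W.val j)) :=
      congrFun (congrFun h j) j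
    rw [h0, zero_mul, smul_zero, smul_eq_zero] at hjj
    rcases hjj with h1 | h1
    · exact (inv_ne_zero ha0.ne') h1
    · rcases mul_eq_zero.mp h1 with h2 | h2
      · exact hj h2
      · exact hj (star_eq_zero.mp h2)
  have hsWj : star (W.val j) ≠ 0 := star_ne_zero.mpr hWj
  refine ⟨(b / a) • (star (Z.val j) * (star (W.val j))⁻¹),
    smul_ne_zero (div_pos hb0 ha0).ne' (mul_ne_zero (star_ne_zero.mpr hj) (inv_ne_zero hsWj)),
    funext fun i => ?_⟩
  have hij : a⁻¹ • (Z.val i * star (Z.val j)) = b⁻¹ • (W.val i * star (W.val j)) :=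
    congrFun (congrFun h i) j
  calc W.val i
      = b • (b⁻¹ • (W.val i * star (W.val j)) * (star (W.val j))⁻¹) := by
        rw [smul_mul_assoc, smul_smul, mul_inv_cancel₀ hb0.ne', one_smul, mul_assoc,
          mul_inv_cancel₀ hsWj, mul_one]
    _ = b • (a⁻¹ • (Z.val i * star (Z.val j)) * (star (W.val j))⁻¹) := by rw [← hij]
    _ = Z.val i * ((b / a) • (star (Z.val j) * (star (W.val j))⁻¹)) := by
        rw [smul_mul_assoc, smul_smul, mul_smul_comm, mul_assoc, div_eq_mul_inv, mul_comm b a⁻¹]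

instance (n : ℕ) : T2Space (HP n) := by
  refine T2Space.of_injective_continuous
    (f := Quot.lift (Pmat n) (Pmat_respects n)) ?_ ?_
  · intro x y
    induction x using Quot.ind with | _ Z =>
    induction y using Quot.ind with | _ W =>
    intro h
    exact Quot.sound (Pmat_inj n h)
  · exact continuous_quot_lift _ (Pmat_continuous n)

end Aux

section Aux2

instance (n : ℕ) : CompactSpace (Sph n) := by
  have h : IsCompact {u : Fin n → HQ | ∑ i, ‖u i‖ ^ 2 = 1} := by
    have hc : Continuous fun u : Fin n → HQ => ∑ i, ‖u i‖ ^ 2 :=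
      continuous_finset_sum _ fun i _ => (continuous_apply i).norm.pow 2
    apply Metric.isCompact_of_isClosed_isBounded
    · exact isClosed_eq hc continuous_const
    · refine (Metric.isBounded_closedBall (x := (0 : Fin n → HQ)) (r := 1)).subset ?_
      intro u hu
      simp only [Metric.mem_closedBall, dist_zero_right]
      refine (pi_norm_le_iff_of_nonneg zero_le_one).mpr fun i => ?_
      have h1 : ‖u i‖ ^ 2 ≤ 1 :=
        hu ▸ Finset.single_le_sum (f := fun i => ‖u i‖ ^ 2)
          (fun j _ => by positivity) (Finset.mem_univ i)
      nlinarith [norm_nonneg (u i)]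
  exact isCompact_iff_compactSpace.mp h

instance (n : ℕ) : CompactSpace (Quot (strRel n)) :=
  ⟨by rw [← (Quot.mk_surjective).range_eq, ← Set.image_univ]
      exact isCompact_univ.image continuous_quot_mk⟩

/-- A continuous global representative of `Fmap`. -/
noncomputable def gfun (n : ℕ) (p : Sph n × Set.Icc (0 : ℝ) 1) : Fin (n + 1) → HQ :=
  Fin.cons ((Real.sqrt (1 - (p.2 : ℝ)) : ℝ) : HQ)
    fun i => p.1.val i * ((Real.sqrt (p.2 : ℝ) : ℝ) : HQ)

lemma gfun_sum (n : ℕ) (p : Sph n × Set.Icc (0 : ℝ) 1) : ∑ i, ‖gfun n p i‖ ^ 2 = 1 := by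
  obtain ⟨⟨u, hu⟩, s, hs⟩ := p
  rw [Fin.sum_univ_succ]
  simp only [gfun, Fin.cons_zero, Fin.cons_succ, norm_mul, Quaternion.norm_coe, mul_pow,
    Real.norm_eq_abs, sq_abs, Real.sq_sqrt (by linarith [hs.2] : (0 : ℝ) ≤ 1 - s),
    Real.sq_sqrt hs.1]
  rw [← Finset.sum_mul, hu]
  ring

lemma gfun_ne_zero (n : ℕ) (p : Sph n × Set.Icc (0 : ℝ) 1) : gfun n p ≠ 0 := by
  intro h
  have h1 := gfun_sum n p
  rw [h] at h1
  simp at h1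

lemma gfun_continuous (n : ℕ) :
    Continuous fun p : Sph n × Set.Icc (0 : ℝ) 1 => (⟨gfun n p, gfun_ne_zero n p⟩ : PV n) := by
  refine Continuous.subtype_mk ?_ _
  refine continuous_pi fun i => ?_
  induction i using Fin.cases with
  | zero =>
    simp only [gfun, Fin.cons_zero]
    exact Quaternion.continuous_coe.comp (Real.continuous_sqrt.comp
      (continuous_const.sub (continuous_subtype_val.comp continuous_snd)))
  | succ i =>
    simp only [gfun, Fin.cons_succ]
    exact ((continuous_apply i).comp (continuous_subtype_val.comp continuous_fst)).mul
      (Quaternion.continuous_coe.comp (Real.continuous_sqrt.comp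
        (continuous_subtype_val.comp continuous_snd)))

lemma fmap_eq (n : ℕ) (p : Sph n × Set.Icc (0 : ℝ) 1) :
    Fmap n p.1 p.2 = Quot.mk (projRel n) ⟨gfun n p, gfun_ne_zero n p⟩ := by
  obtain ⟨u, s⟩ := p
  by_cases h0 : (s : ℝ) = 0
  · simp only [Fmap, dif_pos h0]
    refine congrArg _ (Subtype.ext (funext fun i => ?_))
    induction i using Fin.cases with
    | zero => simp [gfun, h0, Real.sqrt_one]
    | succ i => simp [gfun, h0, Real.sqrt_zero]
  · by_cases h1 : (s : ℝ) = 1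
    · simp only [Fmap, dif_neg h0, dif_pos h1]
      refine congrArg _ (Subtype.ext (funext fun i => ?_))
      induction i using Fin.cases with
      | zero => simp [gfun, h1, Real.sqrt_zero]
      | succ i => simp [gfun, h1, Real.sqrt_one]
    · simp only [Fmap, dif_neg h0, dif_neg h1]
      have hs0 : 0 < (s : ℝ) := lt_of_le_of_ne s.2.1 (Ne.symm h0)
      have hs1 : (s : ℝ) < 1 := lt_of_le_of_ne s.2.2 h1
      refine Quot.sound ⟨((Real.sqrt (s : ℝ) : ℝ) : HQ), ?_, funext fun i => ?_⟩
      · exact_mod_cast fun h => (Real.sqrt_ne_zero'.mpr hs0) (Quaternion.coe_injective h)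
      · induction i using Fin.cases with
        | zero =>
          simp only [gfun, Fin.cons_zero, ← Quaternion.coe_mul]
          rw [← Real.sqrt_mul (div_nonneg (by linarith) hs0.le), div_mul_cancel₀ _ h0]
        | succ i => simp [gfun]

end Aux2

lemma coe_hq_ne_zero {x : ℝ} (hx : x ≠ 0) : ((x : ℝ) : HQ) ≠ 0 := fun h =>
  hx (Quaternion.coe_injective (h.trans (Quaternion.coe_zero).symm))

lemma hresp_lem (m : ℕ) : ∀ p p', strRel (m + 1) p p' → Fmap (m + 1) p.1 p.2 = Fmap (m + 1) p'.1 p'.2 := by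
  rintro p p' (⟨h0, h0'⟩ | ⟨h1, h1', q, hq, hup⟩)
  · rw [fmap_eq, fmap_eq]
    refine Quot.sound ⟨1, one_ne_zero, funext fun i => ?_⟩
    induction i using Fin.cases with
    | zero => simp [gfun, h0, h0']
    | succ i => simp [gfun, h0, h0']
  · rw [fmap_eq, fmap_eq]
    refine Quot.sound ⟨q, fun h => by simp [h] at hq, funext fun i => ?_⟩
    induction i using Fin.cases with
    | zero => simp [gfun, h1, h1']
    | succ i => simp [gfun, h1, h1', hup, Real.sqrt_one]

lemma hinj_lem (m : ℕ) : ∀ p p' : Sph (m + 1) × Set.Icc (0 : ℝ) 1,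
    Quot.mk (projRel (m + 1)) ⟨gfun (m + 1) p, gfun_ne_zero _ p⟩
      = Quot.mk (projRel (m + 1)) ⟨gfun (m + 1) p', gfun_ne_zero _ p'⟩ →
    Quot.mk (strRel (m + 1)) p = Quot.mk (strRel (m + 1)) p' := by
  intro p p' h
  obtain ⟨q, hq, hW⟩ := ((projRel_equivalence (m + 1)).eqvGen_iff).mp (Quot.eqvGen_exact h)
  have hW : gfun (m + 1) p' = fun i => gfun (m + 1) p i * q := hW
  have hq1 : ‖q‖ = 1 := by
    have h2 : ∑ i, ‖gfun (m + 1) p' i‖ ^ 2 = (∑ i, ‖gfun (m + 1) p i‖ ^ 2) * ‖q‖ ^ 2 := by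
      simp only [hW]
      rw [Finset.sum_mul]
      exact Finset.sum_congr rfl fun k _ => by rw [norm_mul, mul_pow]
    rw [gfun_sum, gfun_sum, one_mul] at h2
    have h3 := congrArg Real.sqrt h2.symm
    rwa [Real.sqrt_sq (norm_nonneg q), Real.sqrt_one] at h3
  have h0 := congrFun hW 0
  simp only [gfun, Fin.cons_zero] at h0
  have hss : Real.sqrt (1 - ((p'.2 : ℝ))) = Real.sqrt (1 - ((p.2 : ℝ))) := by
    have h4 := congrArg norm h0
    rwa [norm_mul, Quaternion.norm_coe, Quaternion.norm_coe, hq1, mul_one,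
      Real.norm_eq_abs, Real.norm_eq_abs, abs_of_nonneg (Real.sqrt_nonneg _),
      abs_of_nonneg (Real.sqrt_nonneg _)] at h4
  have hs2 : ((p'.2 : ℝ)) = ((p.2 : ℝ)) := by
    have h5 := congrArg (fun x : ℝ => x ^ 2) hss
    simp only [Real.sq_sqrt (by linarith [p'.2.2.2] : (0 : ℝ) ≤ 1 - (p'.2 : ℝ)),
      Real.sq_sqrt (by linarith [p.2.2.2] : (0 : ℝ) ≤ 1 - (p.2 : ℝ))] at h5
    linarith
  by_cases hz : (p.2 : ℝ) = 0
  · exact Quot.sound (Or.inl ⟨hz, hs2.trans hz⟩)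
  by_cases ho : (p.2 : ℝ) = 1
  · refine Quot.sound (Or.inr ⟨ho, hs2.trans ho, q, hq1, funext fun i => ?_⟩)
    have hsucc := congrFun hW i.succ
    simp only [gfun, Fin.cons_succ, hs2, ho, Real.sqrt_one, Quaternion.coe_one,
      mul_one] at hsucc
    exact hsucc
  · have hspos : 0 < (p.2 : ℝ) := lt_of_le_of_ne p.2.2.1 (Ne.symm hz)
    have hslt : (p.2 : ℝ) < 1 := lt_of_le_of_ne p.2.2.2 ho
    have hc : ((Real.sqrt (1 - (p.2 : ℝ)) : ℝ) : HQ) ≠ 0 :=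
      coe_hq_ne_zero (Real.sqrt_ne_zero'.mpr (by linarith))
    have hq1' : q = 1 := by
      rw [hs2] at h0
      exact (mul_left_cancel₀ hc (by rw [mul_one, ← h0])).symm
    have hsq : ((Real.sqrt (p.2 : ℝ) : ℝ) : HQ) ≠ 0 :=
      coe_hq_ne_zero (Real.sqrt_ne_zero'.mpr hspos)
    have hup : p'.1.val = p.1.val := funext fun i => by
      have hsucc := congrFun hW i.succ
      simp only [gfun, Fin.cons_succ, hq1', mul_one, hs2] at hsucc
      exact mul_right_cancel₀ hsq hsucc
    have hpp : p' = p := Prod.ext (Subtype.ext hup) (Subtype.ext hs2)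
    rw [hpp]

lemma hu0_lem (m : ℕ) : ∑ i, ‖(Pi.single (0 : Fin (m + 1)) (1 : HQ) : Fin (m + 1) → HQ) i‖ ^ 2 = 1 := by
  simp [Pi.single_apply, apply_ite (fun x : HQ => ‖x‖ ^ 2), Finset.sum_ite_eq']

lemma hsurj_lem (m : ℕ) : ∀ Z : PV (m + 1), ∃ p : Sph (m + 1) × Set.Icc (0 : ℝ) 1,
    Quot.mk (projRel (m + 1)) ⟨gfun (m + 1) p, gfun_ne_zero _ p⟩
      = Quot.mk (projRel (m + 1)) Z := by
  intro Z
  by_cases hA : ∀ i : Fin (m + 1), Z.val i.succ = 0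
  · have ha : Z.val 0 ≠ 0 := by
      intro h
      apply Z.prop
      funext i
      induction i using Fin.cases with
      | zero => exact h
      | succ i => exact hA i
    refine ⟨(⟨(Pi.single (0 : Fin (m + 1)) (1 : HQ) : Fin (m + 1) → HQ), hu0_lem m⟩, ⟨0, by norm_num⟩),
      Quot.sound ⟨Z.val 0, ha, funext fun i => ?_⟩⟩
    induction i using Fin.cases with
    | zero => simp [gfun, Real.sqrt_one]
    | succ i => simp [gfun, hA i, Real.sqrt_zero]
  · push_neg at hA
    obtain ⟨j, hj⟩ := hA
    by_cases hz : Z.val 0 = 0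
    · set R := ∑ i : Fin (m + 1), ‖Z.val i.succ‖ ^ 2 with hR
      have hR0 : 0 < R :=
        Finset.sum_pos' (fun i _ => by positivity)
          ⟨j, Finset.mem_univ j, pow_pos (norm_pos_iff.mpr hj) 2⟩
      set r := Real.sqrt R with hrdef
      have hr0 : 0 < r := Real.sqrt_pos.mpr hR0
      have hu : ∑ i : Fin (m + 1), ‖Z.val i.succ * ((r⁻¹ : ℝ) : HQ)‖ ^ 2 = 1 := by
        have he : ∀ i : Fin (m + 1), ‖Z.val i.succ * ((r⁻¹ : ℝ) : HQ)‖ ^ 2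
            = ‖Z.val i.succ‖ ^ 2 * (r⁻¹) ^ 2 := fun i => by
          rw [norm_mul, mul_pow, Quaternion.norm_coe, Real.norm_eq_abs, sq_abs]
        rw [Finset.sum_congr rfl fun i _ => he i, ← Finset.sum_mul, ← hR, hrdef,
          inv_pow, Real.sq_sqrt hR0.le]
        exact mul_inv_cancel₀ hR0.ne'
      refine ⟨(⟨fun i => Z.val i.succ * ((r⁻¹ : ℝ) : HQ), hu⟩, ⟨1, by norm_num⟩),
        Quot.sound ⟨((r : ℝ) : HQ), coe_hq_ne_zero hr0.ne', funext fun i => ?_⟩⟩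
      induction i using Fin.cases with
      | zero => simp [gfun, hz]
      | succ i =>
        simp only [gfun, Fin.cons_succ, Real.sqrt_one, Quaternion.coe_one, mul_one]
        rw [mul_assoc, ← Quaternion.coe_mul, inv_mul_cancel₀ hr0.ne',
          Quaternion.coe_one, mul_one]
    · set a := Z.val 0 with ha
      set M := ∑ i : Fin (m + 1), ‖Z.val i.succ * a⁻¹‖ ^ 2 with hM
      have hM0 : 0 < M :=
        Finset.sum_pos' (fun i _ => by positivity)
          ⟨j, Finset.mem_univ j,
            pow_pos (norm_pos_iff.mpr (mul_ne_zero hj (inv_ne_zero hz))) 2⟩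
      set c := (Real.sqrt M)⁻¹ with hcdef
      have hc0 : 0 < c := inv_pos.mpr (Real.sqrt_pos.mpr hM0)
      set T := Real.sqrt (1 + c ^ 2) with hT
      have hc2 : 0 < c ^ 2 := pow_pos hc0 2
      have hone : (1 : ℝ) < 1 + c ^ 2 := by linarith
      have hne : (1 : ℝ) + c ^ 2 ≠ 0 := by linarith
      have hT0 : 0 < T := Real.sqrt_pos.mpr (by linarith)
      set s : ℝ := (1 + c ^ 2)⁻¹ with hs
      have hs0 : 0 < s := inv_pos.mpr (by linarith)
      have hs1 : s < 1 := by
        rw [hs]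
        exact inv_lt_one_of_one_lt₀ hone
      have hsqs : Real.sqrt s = T⁻¹ := by rw [hs, Real.sqrt_inv, hT]
      have h1s : 1 - s = c ^ 2 / (1 + c ^ 2) := by
        rw [hs, eq_div_iff hne, sub_mul, inv_mul_cancel₀ hne, one_mul]
        ring
      have hsq1s : Real.sqrt (1 - s) = c * T⁻¹ := by
        rw [h1s, hT, div_eq_mul_inv, Real.sqrt_mul (sq_nonneg c), Real.sqrt_inv,
          Real.sqrt_sq hc0.le]
      have h1snz : Real.sqrt (1 - s) ≠ 0 := by
        rw [hsq1s]
        exact (mul_pos hc0 (inv_pos.mpr hT0)).ne'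
      have hreal : c * Real.sqrt s * (Real.sqrt (1 - s))⁻¹ = 1 := by
        rw [hsqs, hsq1s]
        exact mul_inv_cancel₀ (mul_pos hc0 (inv_pos.mpr hT0)).ne'
      have husum : ∑ i : Fin (m + 1), ‖Z.val i.succ * a⁻¹ * ((c : ℝ) : HQ)‖ ^ 2 = 1 := by
        have he : ∀ i : Fin (m + 1), ‖Z.val i.succ * a⁻¹ * ((c : ℝ) : HQ)‖ ^ 2
            = ‖Z.val i.succ * a⁻¹‖ ^ 2 * c ^ 2 := fun i => by
          rw [norm_mul, mul_pow, Quaternion.norm_coe, Real.norm_eq_abs, sq_abs]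
        rw [Finset.sum_congr rfl fun i _ => he i, ← Finset.sum_mul, ← hM, hcdef,
          inv_pow, Real.sq_sqrt hM0.le]
        exact mul_inv_cancel₀ hM0.ne'
      refine ⟨(⟨fun i => Z.val i.succ * a⁻¹ * ((c : ℝ) : HQ), husum⟩, ⟨s, hs0.le, hs1.le⟩),
        Quot.sound ⟨(((Real.sqrt (1 - s))⁻¹ : ℝ) : HQ) * a,
          mul_ne_zero (coe_hq_ne_zero (inv_ne_zero h1snz)) hz, funext fun i => ?_⟩⟩
      induction i using Fin.cases with
      | zero =>
        simp only [gfun, Fin.cons_zero]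
        rw [← mul_assoc, ← Quaternion.coe_mul, mul_inv_cancel₀ h1snz,
          Quaternion.coe_one, one_mul]
      | succ i =>
        simp only [gfun, Fin.cons_succ]
        symm
        calc Z.val i.succ * a⁻¹ * ((c : ℝ) : HQ) * ((Real.sqrt s : ℝ) : HQ)
              * ((((Real.sqrt (1 - s))⁻¹ : ℝ) : HQ) * a)
            = Z.val i.succ * a⁻¹ * (((c : ℝ) : HQ) * ((Real.sqrt s : ℝ) : HQ)
              * ((((Real.sqrt (1 - s))⁻¹ : ℝ) : HQ)) * a) := by
              simp only [mul_assoc]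
          _ = Z.val i.succ := by
              rw [← Quaternion.coe_mul, ← Quaternion.coe_mul, hreal, Quaternion.coe_one,
                one_mul, mul_assoc, inv_mul_cancel₀ hz, mul_one]

set_option maxHeartbeats 1000000 in
/-- For `n ≥ 1`, the map `F` descends to a homeomorphism from the quotient space
`(S^{4n−1} × [0,1])/∼` (with the quotient topology) onto `ℍPⁿ`.  This realizes the
closure of the stratum `X₀₁` of `D Sp(n)_impl` as the quaternionic projective space. -/
theorem fmap_descends_homeo (n : ℕ) (hn : 1 ≤ n) :
    ∃ G : Quot (strRel n) ≃ₜ HP n,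
      ∀ p : Sph n × (Set.Icc (0 : ℝ) 1), G (Quot.mk _ p) = Fmap n p.1 p.2 := by
  classical
  obtain ⟨m, rfl⟩ : ∃ m, n = m + 1 := ⟨n - 1, by omega⟩
  have hresp := hresp_lem m
  have hinj := hinj_lem m
  have hsurj := hsurj_lem m
  let f : Quot (strRel (m + 1)) → HP (m + 1) :=
    Quot.lift (fun p => Fmap (m + 1) p.1 p.2) hresp
  have hFc : Continuous fun p : Sph (m + 1) × Set.Icc (0 : ℝ) 1 => Fmap (m + 1) p.1 p.2 := by
    have he : (fun p : Sph (m + 1) × Set.Icc (0 : ℝ) 1 => Fmap (m + 1) p.1 p.2)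
        = fun p => Quot.mk (projRel (m + 1)) ⟨gfun (m + 1) p, gfun_ne_zero _ p⟩ :=
      funext fun p => fmap_eq (m + 1) p
    rw [he]
    exact continuous_quot_mk.comp (gfun_continuous (m + 1))
  have hfc : Continuous f := continuous_quot_lift _ hFc
  have hbij : Function.Bijective f := by
    constructor
    · intro x y
      induction x using Quot.ind with | _ p =>
      induction y using Quot.ind with | _ p' =>
      intro h
      exact hinj p p' ((fmap_eq (m + 1) p).symm.trans (h.trans (fmap_eq (m + 1) p')))
    · intro y
      induction y using Quot.ind with | _ Z =>
      obtain ⟨p, hp⟩ := hsurj Z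
      exact ⟨Quot.mk _ p, (fmap_eq (m + 1) p).trans hp⟩
  let E : Quot (strRel (m + 1)) ≃ HP (m + 1) := Equiv.ofBijective f hbij
  have hEc : Continuous ⇑E := hfc
  exact ⟨hEc.homeoOfEquivCompactToT2, fun p => rfl⟩
end

section
/- For n ≥ 1, the map (u, s) ↦ [√((1−s)/s) : u₁ : … : uₙ] restricted to S^{4n−1} × (0,1) is a homeomorphism onto the subspace {[Z₀ : … : Zₙ] ∈ ℍPⁿ : Z₀ ≠ 0 and (Z₁, …, Zₙ) ≠ 0} (these conditions are independent of the chosen representative, since right scaling by a nonzero quaternion preserves vanishing of components). -/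
open Matrix

/-!
On the affine chart `Z₀ ≠ 0`, the class `[Z]` is determined by the coordinates
`wᵢ = Zᵢ₊₁ Z₀⁻¹`, which are invariant under right scaling; this identifies the subspace in
question with `ℍⁿ ∖ {0}`, continuously in both directions because `Quot.mk` restricted to the
open saturated set of such `Z` is still a quotient map. Polar coordinates identify `ℍⁿ ∖ {0}`
(with its Euclidean norm) with `S^{4n−1} × (0, ∞)`, and `ρ ↦ ρ² / (1 + ρ²)` identifies
`(0, ∞)` with `(0, 1)`. The inverse of the composite sends `(u, s)` to `[1 : ρu] = [ρ⁻¹ : u]`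
with `ρ = √(s / (1 − s))`, that is `ρ⁻¹ = √((1 − s) / s)`.
-/

open Set Metric Topology

variable {n : ℕ}

section AffineTail

variable {K : Type*} [DivisionRing K]

def affineTail (Z : Fin (n + 1) → K) : Fin n → K := fun i => Z i.succ * (Z 0)⁻¹

lemma affineTail_mul_right (Z : Fin (n + 1) → K) {q : K} (hq : q ≠ 0) :
    affineTail (fun i => Z i * q) = affineTail Z := by
  funext i
  simp only [affineTail, _root_.mul_inv_rev, mul_assoc, mul_inv_cancel_left₀ hq]

lemma affineTail_cons_one (w : Fin n → K) : affineTail (Fin.cons 1 w) = w := by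
  funext i
  simp [affineTail]

end AffineTail

-- Stated at type `HP n`, whose topology is not reducibly that of `Quot`, so that it applies to
-- goals about `HP n`.
lemma HP.isQuotientMap_mk : @IsQuotientMap (PV n) (HP n) _ _ (Quot.mk _) :=
  isQuotientMap_quot_mk

def IsChartPoint (Z : PV n) : Prop := Z.val 0 ≠ 0 ∧ ∃ i : Fin n, Z.val i.succ ≠ 0

lemma isChartPoint_iff_of_projRel {Z W : PV n} (h : projRel n Z W) :
    IsChartPoint Z ↔ IsChartPoint W := by
  obtain ⟨q, hq, hW⟩ := h
  simp only [IsChartPoint, hW, ne_eq, mul_eq_zero, hq, or_false]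

def chartDomain (n : ℕ) : Set (HP n) := {x | ∃ Z : PV n, Quot.mk _ Z = x ∧ IsChartPoint Z}

lemma mk_mem_chartDomain_iff (Z : PV n) : Quot.mk _ Z ∈ chartDomain n ↔ IsChartPoint Z := by
  refine ⟨fun ⟨W, hWZ, hW⟩ => ?_, fun hZ => ⟨Z, rfl, hZ⟩⟩
  have := congrArg (Quot.lift (fun Z => IsChartPoint Z)
    fun _ _ h => propext (isChartPoint_iff_of_projRel h)) hWZ
  simpa [this] using hW

lemma PV.continuous_val_apply (i : Fin (n + 1)) : Continuous fun Z : PV n => Z.val i :=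
  (continuous_apply i).comp continuous_subtype_val

lemma mk_preimage_chartDomain :
    @preimage (PV n) (HP n) (Quot.mk _) (chartDomain n) = {Z : PV n | IsChartPoint Z} :=
  ext mk_mem_chartDomain_iff

lemma isOpen_chartDomain : IsOpen (chartDomain n) := by
  rw [← HP.isQuotientMap_mk.isOpen_preimage, mk_preimage_chartDomain]
  simp only [IsChartPoint, ofPred_and, ofPred_exists]
  exact (isOpen_ne_fun (PV.continuous_val_apply 0) continuous_const).inter
    (isOpen_iUnion fun i => isOpen_ne_fun (PV.continuous_val_apply i.succ) continuous_const)

noncomputable def HP.affineTail : HP n → Fin n → HQ :=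
  Quot.lift (fun Z => _root_.affineTail Z.val) fun Z _ ⟨_, hq, hW⟩ => by
    rw [hW, affineTail_mul_right _ hq]

lemma HP.continuousOn_affineTail : ContinuousOn HP.affineTail (chartDomain n) := by
  rw [HP.isQuotientMap_mk.continuousOn_isOpen_iff isOpen_chartDomain, mk_preimage_chartDomain]
  exact continuousOn_pi.2 fun i => (PV.continuous_val_apply i.succ).continuousOn.mul
    ((PV.continuous_val_apply 0).continuousOn.inv₀ fun Z hZ => hZ.1)

lemma projRel_cons_one_affineTail (Z : PV n) (h0 : Z.val 0 ≠ 0) :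
    projRel n Z ⟨Fin.cons 1 (affineTail Z.val), cons_one_ne_zero _⟩ := by
  refine ⟨(Z.val 0)⁻¹, inv_ne_zero h0, funext fun i => ?_⟩
  cases i using Fin.cases with
  | zero => simp [mul_inv_cancel₀ h0]
  | succ i => rfl

noncomputable def affineChart (n : ℕ) : chartDomain n ≃ₜ {w : Fin n → HQ // w ≠ 0} where
  toFun x := ⟨x.1.affineTail, by
    obtain ⟨_, Z, rfl, h0, i, hi⟩ := x
    exact Function.ne_iff.2 ⟨i, mul_ne_zero hi (inv_ne_zero h0)⟩⟩
  invFun w := ⟨HPmk (Fin.cons 1 w.1) (cons_one_ne_zero _), _, rfl, one_ne_zero,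
    by simpa [Function.ne_iff] using w.2⟩
  left_inv := by
    rintro ⟨_, Z, rfl, h0, -⟩
    exact Subtype.ext (Quot.sound (projRel_cons_one_affineTail Z h0)).symm
  right_inv w := Subtype.ext (affineTail_cons_one w.1)
  continuous_toFun := HP.continuousOn_affineTail.domRestrict.subtype_mk _
  continuous_invFun := by
    refine (HP.isQuotientMap_mk.continuous.comp (Continuous.subtype_mk ?_ _)).subtype_mk _
    exact continuous_const.finCons continuous_subtype_val

lemma HPmk_cons_one_inv_smul (u : Fin n → HQ) {c : ℝ} (hc : c ≠ 0) :
    HPmk (Fin.cons 1 (c⁻¹ • u)) (cons_one_ne_zero _) = HPmk (Fin.cons (c : HQ) u)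
      (cons_coe_ne_zero u hc) := by
  refine Quot.sound ⟨c, fun h => hc (Quaternion.coe_injective h), funext fun i => ?_⟩
  cases i using Fin.cases with
  | zero => simp
  | succ i => simp [Quaternion.mul_coe_eq_smul, smul_smul, inv_mul_cancel₀ hc]

noncomputable def ioiHomeomorphIoo : Ioi (0 : ℝ) ≃ₜ Ioo (0 : ℝ) 1 where
  toFun ρ := ⟨ρ ^ 2 / (1 + ρ ^ 2), by
    have hρ : 0 < (ρ : ℝ) := ρ.2
    constructor
    · positivity
    · rw [div_lt_one (by positivity)]; linarith⟩
  invFun s := ⟨√(s / (1 - s)), Real.sqrt_pos.2 (div_pos s.2.1 (sub_pos.2 s.2.2))⟩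
  left_inv ρ := by
    have hρ : 0 < (ρ : ℝ) := ρ.2
    have hsq : ρ ^ 2 / (1 + ρ ^ 2) / (1 - ρ ^ 2 / (1 + ρ ^ 2)) = (ρ : ℝ) ^ 2 := by
      field_simp
      ring
    ext
    simp only [hsq, Real.sqrt_sq hρ.le]
  right_inv s := by
    have hs : 0 < s.1 / (1 - s.1) := div_pos s.2.1 (sub_pos.2 s.2.2)
    have h1 : 1 - s.1 ≠ 0 := (sub_pos.2 s.2.2).ne'
    ext
    simp only [Real.sq_sqrt hs.le]
    field_simp
    ring
  continuous_toFun := by fun_prop (disch := intro; positivity)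
  continuous_invFun := by
    refine Continuous.subtype_mk ?_ _
    refine Real.continuous_sqrt.comp (Continuous.div (by fun_prop) (by fun_prop) fun s => ?_)
    exact (sub_pos.2 s.2.2).ne'

abbrev HQEuclidean (n : ℕ) : Type := PiLp 2 fun _ : Fin n => HQ

noncomputable def sphHomeomorphSphere (n : ℕ) : Sph n ≃ₜ sphere (0 : HQEuclidean n) 1 :=
  (PiLp.homeomorph 2 _).symm.subtype fun u => by
    rw [mem_sphere_zero_iff_norm, PiLp.norm_eq_of_L2, Real.sqrt_eq_one]
    rfl

noncomputable def neZeroHomeomorphEuclidean (n : ℕ) :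
    {w : Fin n → HQ // w ≠ 0} ≃ₜ ({0}ᶜ : Set (HQEuclidean n)) :=
  (PiLp.homeomorph 2 _).symm.subtype fun w => by simp [PiLp.homeomorph]

noncomputable def neZeroHomeomorphSphProdIoo (n : ℕ) :
    {w : Fin n → HQ // w ≠ 0} ≃ₜ Sph n × Ioo (0 : ℝ) 1 :=
  ((neZeroHomeomorphEuclidean n).trans (homeomorphUnitSphereProd (HQEuclidean n))).trans
    ((sphHomeomorphSphere n).symm.prodCongr ioiHomeomorphIoo)

/-- For `n ≥ 1`, the map `(u, s) ↦ [√((1−s)/s) : u₁ : … : uₙ]` restricted to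
`S^{4n−1} × (0,1)` is a homeomorphism onto the subspace of `ℍPⁿ` of classes
`[Z₀ : … : Zₙ]` with `Z₀ ≠ 0` and `(Z₁, …, Zₙ) ≠ 0` (conditions independent of the
chosen representative, since right scaling by a nonzero quaternion preserves vanishing
of components). -/
theorem fmap_middle_homeo (n : ℕ) :
    ∃ h : (Sph n × (Set.Ioo (0 : ℝ) 1)) ≃ₜ
        {x : HP n // ∃ Z : PV n, Quot.mk _ Z = x ∧
          Z.val 0 ≠ 0 ∧ ∃ i : Fin n, Z.val i.succ ≠ 0},
      ∀ (u : Sph n) (s : Set.Ioo (0 : ℝ) 1),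
        (h (u, s) : HP n) =
          HPmk (Fin.cons ((Real.sqrt ((1 - s) / s) : ℝ) : HQ) u.val)
            (cons_coe_ne_zero u.val (ne_of_gt (Real.sqrt_pos.mpr
              (div_pos (by linarith [s.2.2]) s.2.1)))) := by
  refine ⟨((affineChart n).trans (neZeroHomeomorphSphProdIoo n)).symm, fun u s => ?_⟩
  have hc : √((1 - s) / s) ≠ 0 := (Real.sqrt_pos.2 (div_pos (sub_pos.2 s.2.2) s.2.1)).ne'
  have hρ : √(s / (1 - s)) = (√((1 - s) / s))⁻¹ := by rw [← Real.sqrt_inv, inv_div]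
  change HPmk (Fin.cons 1 (√(s / (1 - s)) • u.val)) (cons_one_ne_zero _) = _
  rw [hρ]
  exact HPmk_cons_one_inv_smul u.val hc
end

section
/- Fix a real number c > 0. For a nonzero quaternion q set λ(q) = c/(c + ‖q‖²) and let w(q) be the quaternion cos(π·λ(q)) + sin(π·λ(q))·i. Then the function q ↦ ‖q‖⁻²·(star q · w(q) · q − ‖q‖²) on ℍ \ {0} tends to −2 as q → 0 (along the punctured neighborhood filter). (This is the limit showing that the entries C_{pq} = (|Z₁|² Σ|Z_l|²)⁻¹ Z_{p+1}[Z̄₁ e^{iπλ} Z₁ − |Z₁|²] Z̄_{q+1} of the moment map extend continuously across Z₁ = 0.) -/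
open Real Filter

/-- The distinguished imaginary unit `i` of the quaternions. -/
noncomputable def quatI : HQ := ⟨0, 1, 0, 0⟩

/-! Since `‖q‖⁻² • star q = q⁻¹`, the expression equals `q⁻¹ w q - 1`, which is
`(cos πλ - 1) + sin πλ • (q⁻¹ i q)`. As `q → 0` we have `λ → 1`, so the first term tends to `-2`,
while the second tends to `0` because conjugation preserves the norm of `i`. -/

open Quaternion Topology

namespace Quaternion

theorem inv_eq_inv_norm_sq_smul_star (q : ℍ[ℝ]) : q⁻¹ = (‖q‖ ^ 2)⁻¹ • star q := by
  rw [inv_def, normSq_eq_norm_mul_self, sq]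

theorem norm_inv_mul_mul_le (q x : ℍ[ℝ]) : ‖q⁻¹ * x * q‖ ≤ ‖x‖ := by
  rcases eq_or_ne q 0 with rfl | hq
  · simp
  · rw [norm_mul, norm_mul, norm_inv, mul_comm _ ‖x‖, mul_assoc,
      inv_mul_cancel₀ (norm_ne_zero_iff.2 hq), mul_one]

theorem inv_norm_sq_smul_star_mul_mul_sub_norm_sq {q : ℍ[ℝ]} (hq : q ≠ 0)
    (x : ℍ[ℝ]) (r s : ℝ) :
    (‖q‖ ^ 2)⁻¹ • (star q * ((r : ℍ[ℝ]) + (s : ℍ[ℝ]) * x) * q - ((‖q‖ ^ 2 : ℝ) : ℍ[ℝ])) =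
      ((r - 1 : ℝ) : ℍ[ℝ]) + s • (q⁻¹ * x * q) := by
  have hn : ‖q‖ ^ 2 ≠ 0 := by positivity
  have hconj (y : ℍ[ℝ]) : (‖q‖ ^ 2)⁻¹ • (star q * y * q) = q⁻¹ * y * q := by
    rw [inv_eq_inv_norm_sq_smul_star, smul_mul_assoc, smul_mul_assoc]
  calc _ = q⁻¹ * ((r : ℍ[ℝ]) + (s : ℍ[ℝ]) * x) * q - 1 := by
        rw [smul_sub, hconj, ← coe_smul, smul_eq_mul, inv_mul_cancel₀ hn, coe_one]
    _ = _ := by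
        simp only [mul_add, add_mul, mul_coe_eq_smul, smul_mul_assoc, ← mul_assoc,
          inv_mul_cancel₀ hq]
        rw [← coe_mul_eq_smul, mul_one, coe_sub, coe_one]
        abel

end Quaternion

/-- Fix a real number `c > 0`.  For a nonzero quaternion `q` set
`λ(q) = c/(c + ‖q‖²)` and let `w(q) = cos(π·λ(q)) + sin(π·λ(q))·i`.  Then the function
`q ↦ ‖q‖⁻²·(star q · w(q) · q − ‖q‖²)` on `ℍ \ {0}` tends to `−2` as `q → 0` along the
punctured neighborhood filter.  (This is the limit showing that the entries
`C_{pq} = (|Z₁|² Σ|Z_l|²)⁻¹ Z_{p+1}[Z̄₁ e^{iπλ} Z₁ − |Z₁|²] Z̄_{q+1}` of the moment map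
extend continuously across `Z₁ = 0`.) -/
theorem moment_map_entry_tendsto_neg_two (c : ℝ) (hc : 0 < c) :
    Tendsto
      (fun q : HQ =>
        (‖q‖ ^ 2)⁻¹ •
          (star q * (((Real.cos (π * (c / (c + ‖q‖ ^ 2))) : ℝ) : HQ) +
              ((Real.sin (π * (c / (c + ‖q‖ ^ 2))) : ℝ) : HQ) * quatI) * q -
            ((‖q‖ ^ 2 : ℝ) : HQ)))
      (nhdsWithin 0 {0}ᶜ) (nhds (-2)) := by
  set θ : HQ → ℝ := fun q => π * (c / (c + ‖q‖ ^ 2))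
  have hθ : Tendsto θ (𝓝[≠] 0) (𝓝 π) := by
    have hθ_cont : Continuous θ := by fun_prop (disch := intro; positivity)
    simpa [θ, hc.ne'] using (hθ_cont.tendsto 0).mono_left nhdsWithin_le_nhds
  have hcos : Tendsto (fun q => ((cos (θ q) - 1 : ℝ) : HQ)) (𝓝[≠] 0) (𝓝 (-2)) := by
    have h := (continuous_coe.tendsto _).comp (((continuous_cos.tendsto π).comp hθ).sub_const 1)
    rwa [cos_pi, show ((-1 - 1 : ℝ) : HQ) = -2 by norm_num; rfl] at h
  have hsin : Tendsto (fun q => sin (θ q) • (q⁻¹ * quatI * q)) (𝓝[≠] 0) (𝓝 0) := by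
    refine Tendsto.zero_smul_isBoundedUnder_le ?_
      (isBoundedUnder_of ⟨‖quatI‖, fun q => norm_inv_mul_mul_le q quatI⟩)
    exact sin_pi ▸ (continuous_sin.tendsto π).comp hθ
  refine (add_zero (-2 : HQ) ▸ hcos.add hsin).congr' ?_
  filter_upwards [self_mem_nhdsWithin] with q hq
  exact (inv_norm_sq_smul_star_mul_mul_sub_norm_sq hq quatI _ _).symm
end
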